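/- For well-formed networks M, N, L, the composition (M ⊛ N) ⊛ L is defined if and only if M ⊛ (N ⊛ L) is defined, and whenever both are defined they are equal. -/
import Mathlib


open scoped ENNReal Classical

namespace PBC

/-! ### Sub-distributions -/

/-- A (raw) sub-distribution over `α`: a function into `ℝ≥0∞`. -/
abbrev SDist (α : Type) := α → ℝ≥0∞

/-- The mass of a sub-distribution. -/
noncomputable def mass {α : Type} (Δ : SDist α) : ℝ≥0∞ := ∑' a, Δ a

/-- `Δ` is a probability sub-distribution: its mass is at most `1`. -/
def IsSubDist {α : Type} (Δ : SDist α) : Prop := mass Δ ≤ 1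

/-- `Δ` is a (full) probability distribution: its mass is exactly `1`. -/
def IsDist {α : Type} (Δ : SDist α) : Prop := mass Δ = 1

/-- The point (Dirac) distribution at `a`. -/
noncomputable def dirac {α : Type} (a : α) : SDist α := fun b => if b = a then 1 else 0

/-- Pushforward of a sub-distribution along a function. -/
noncomputable def push {α β : Type} (f : α → β) (Δ : SDist α) : SDist β :=
  fun b => ∑' a, if f a = b then Δ a else 0

/-- Pushforward of a pair of sub-distributions along a binary function. -/
noncomputable def push2 {α β γ : Type} (f : α → β → γ) (Δ : SDist α) (Θ : SDist β) : SDist γ :=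
  fun c => ∑' q : α × β, if f q.1 q.2 = c then Δ q.1 * Θ q.2 else 0

/-- Lifting of a relation from states to sub-distributions, to a relation between
sub-distributions: the smallest relation containing the point-distribution instances of `R`
and closed under finite sub-convex combinations. -/
inductive Lift {α : Type} (R : α → SDist α → Prop) : SDist α → SDist α → Prop where
  | single {a : α} {Δ : SDist α} : R a Δ → Lift R (dirac a) Δ
  | sum {n : ℕ} (p : Fin n → ℝ≥0∞) (Δ Θ : Fin n → SDist α) :
      (∑ i, p i) ≤ 1 → (∀ i, Lift R (Δ i) (Θ i)) →
      Lift R (fun a => ∑ i, p i * Δ i a) (fun a => ∑ i, p i * Θ i a)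

/-- Lifting of a relation between states to a relation between sub-distributions. -/
def LiftRel {α : Type} (R : α → α → Prop) : SDist α → SDist α → Prop :=
  Lift fun a Θ => ∃ b, R a b ∧ Θ = dirac b

/-- Hyper-derivations, generically with respect to a (τ-)step relation `R` and a success
predicate `succ`: `Δ` splits as `go 0 + halt 0`, each `go k` makes a lifted `R`-step to
`go (k+1) + halt (k+1)`, the supports of the `go k` contain no successful states, and the
result is `∑' k, halt k`. -/
def GHyper {α : Type} (R : α → SDist α → Prop) (succ : α → Prop) (Δ Δ' : SDist α) : Prop :=
  ∃ go halt : ℕ → SDist α,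
    (∀ a, Δ a = go 0 a + halt 0 a) ∧
    (∀ k, Lift R (go k) (fun a => go (k + 1) a + halt (k + 1) a)) ∧
    (∀ k a, go k a ≠ 0 → ¬ succ a) ∧
    (∀ a, Δ' a = ∑' k, halt k a)

/-- Extreme derivatives: hyper-derivations whose resulting sub-distribution is supported on
states that are successful whenever they can still perform an `R`-step. -/
def GExtreme {α : Type} (R : α → SDist α → Prop) (succ : α → Prop) (Δ Δ' : SDist α) : Prop :=
  GHyper R succ Δ Δ' ∧ ∀ a, Δ' a ≠ 0 → (∃ Θ, R a Θ) → succ a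

/-! ### Probabilistic labelled transition systems -/

/-- A probabilistic labelled transition system over states `S` and actions `Act`:
a distinguished internal action `τ`, a transition relation into full distributions,
and a success predicate `ω`. -/
structure PLTS (S : Type) (Act : Type) where
  tau : Act
  trans : S → Act → SDist S → Prop
  trans_dist : ∀ s a Δ, trans s a Δ → IsDist Δ
  omega : S → Prop

/-- The internal step relation of a pLTS. -/
def PLTS.tauStep {S Act : Type} (L : PLTS S Act) : S → SDist S → Prop :=
  fun s Δ => L.trans s L.tau Δ

/-- Hyper-derivations `Δ ⟹ Δ'` in a pLTS. -/
def HyperDeriv {S Act : Type} (L : PLTS S Act) : SDist S → SDist S → Prop :=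
  GHyper L.tauStep L.omega

/-- Extreme derivatives `Δ ⟹≻ Δ'` in a pLTS. -/
def ExtremeDeriv {S Act : Type} (L : PLTS S Act) : SDist S → SDist S → Prop :=
  GExtreme L.tauStep L.omega

/-- A pLTS is convergent if no state has a hyper-derivation to the empty sub-distribution. -/
def Convergent {S Act : Type} (L : PLTS S Act) : Prop :=
  ∀ s : S, ¬ HyperDeriv L (dirac s) (fun _ => 0)

end PBC
namespace PBC

/-! ### Syntax of the probabilistic broadcast calculus -/

abbrev Name := ℕ
abbrev Chan := ℕ
abbrev Val := ℕ
abbrev DefId := ℕ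

/-- Probabilities: elements of `[0,1]`. -/
abbrev Prob := {q : ℝ≥0∞ // q ≤ 1}

mutual
  /-- States of the broadcast calculus: `nil`, the success clause `ω`, broadcast
  `c!⟨e⟩.p` (the closed expression `e` is represented by its value), receive `c?(x).p`
  (binding represented functionally), choice, matching (the closed boolean condition is
  represented by its value), `τ.p`, and recursive calls `A⟨ẽ⟩`. -/
  inductive PState : Type where
    | nil : PState
    | success : PState
    | bcast : Chan → Val → Proc → PState
    | recv : Chan → (Val → Proc) → PState
    | choice : PState → PState → PState
    | mtch : Bool → PState → PState → PState
    | pre : Proc → PState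
    | call : DefId → List Val → PState
  /-- Probabilistic processes: finite probabilistic choices over states. -/
  inductive Proc : Type where
    | st : PState → Proc
    | pchoice : Proc → Prob → Proc → Proc
end

/-- An environment of recursive definitions `A(x̃) ⇐ s`, presented in substituted form. -/
abbrev Env := DefId → List Val → PState

/-- The interpretation of a probabilistic process as a distribution over states. -/
noncomputable def Proc.interp : Proc → SDist PState
  | .st s => dirac s
  | .pchoice p q r => fun t => q.1 * Proc.interp p t + (1 - q.1) * Proc.interp r t

/-! ### Pre-semantics of states -/

inductive SAct : Type where
  | out : Chan → Val → SAct
  | inp : Chan → Val → SAct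
  | tau : SAct

/-- The pre-semantics of states. -/
inductive SStep (env : Env) : PState → SAct → SDist PState → Prop where
  | snd {c v p} : SStep env (.bcast c v p) (.out c v) (Proc.interp p)
  | rcv {c f v} : SStep env (.recv c f) (.inp c v) (Proc.interp (f v))
  | tau {p} : SStep env (.pre p) .tau (Proc.interp p)
  | sumL {s t α Δ} : SStep env s α Δ → SStep env (.choice s t) α Δ
  | sumR {s t α Δ} : SStep env t α Δ → SStep env (.choice s t) α Δ
  | mthen {s t α Δ} : SStep env s α Δ → SStep env (.mtch true s t) α Δ
  | melse {s t α Δ} : SStep env t α Δ → SStep env (.mtch false s t) α Δ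
  | call {A vs α Δ} : SStep env (env A vs) α Δ → SStep env (.call A vs) α Δ

/-! ### System terms, connectivity graphs and networks -/

/-- System terms: parallel compositions of located states. -/
inductive Sys : Type where
  | nil : Sys
  | node : Name → PState → Sys
  | par : Sys → Sys → Sys

/-- The multiset of node names occurring in a system term. -/
def Sys.nodesM : Sys → Multiset Name
  | .nil => 0
  | .node n _ => {n}
  | .par M N => Sys.nodesM M + Sys.nodesM N

/-- The set of node names occurring in a system term. -/
def Sys.nodes (M : Sys) : Finset Name := M.nodesM.toFinset

/-- A connectivity graph: a finite digraph over node names. -/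
structure Graph : Type where
  V : Finset Name
  E : Finset (Name × Name)

/-- A connectivity graph is ok if its edges join vertices and the edge relation is
irreflexive. -/
def Graph.ok (Γ : Graph) : Prop :=
  (∀ e ∈ Γ.E, e.1 ∈ Γ.V ∧ e.2 ∈ Γ.V) ∧ (∀ e ∈ Γ.E, e.1 ≠ e.2)

/-- Componentwise union of connectivity graphs. -/
def Graph.union (Γ₁ Γ₂ : Graph) : Graph := ⟨Γ₁.V ∪ Γ₂.V, Γ₁.E ∪ Γ₂.E⟩

/-- A network: a connectivity graph together with a system term. -/
structure Net : Type where
  g : Graph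
  sys : Sys

def Net.nodes (N : Net) : Finset Name := N.sys.nodes

/-- Validity of a network: the graph is a connectivity graph, each node name occurs at most
once in the system term, and all its nodes are vertices of the graph. -/
def Net.valid (N : Net) : Prop := N.g.ok ∧ N.sys.nodesM.Nodup ∧ N.nodes ⊆ N.g.V

/-- The interface of a network. -/
def Net.interf (N : Net) : Finset Name := N.g.V \ N.nodes

/-- Input nodes: interface nodes with an edge to an internal node. -/
def Net.inp (N : Net) : Set Name := {i | i ∈ N.interf ∧ ∃ m ∈ N.nodes, (i, m) ∈ N.g.E}

/-- Output nodes: interface nodes with an edge from an internal node. -/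
def Net.out (N : Net) : Set Name := {o | o ∈ N.interf ∧ ∃ m ∈ N.nodes, (m, o) ∈ N.g.E}

/-- Well-formed networks: valid, every edge has an internal endpoint, and every isolated
vertex is internal. -/
def Net.wf (N : Net) : Prop :=
  N.valid ∧ (∀ e ∈ N.g.E, e.1 ∈ N.nodes ∨ e.2 ∈ N.nodes) ∧
    (∀ v ∈ N.g.V, (∀ w, (v, w) ∉ N.g.E ∧ (w, v) ∉ N.g.E) → v ∈ N.nodes)

/-- The composition `M ⊛ N` of two networks (as a total operation on the underlying data). -/
def Net.comp (M N : Net) : Net := ⟨M.g.union N.g, .par M.sys N.sys⟩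

/-- `M ⊛ N` is defined exactly when `nodes(M) ∩ (Γ_N)_V = ∅`. -/
def Net.Defined (M N : Net) : Prop := ∀ n ∈ M.nodes, n ∉ N.g.V

/-! ### Structural congruence -/

/-- Structural congruence of states: commutative monoid laws for `+` and `nil`,
unfolding of matching and of recursive definitions. -/
inductive SCong (env : Env) : PState → PState → Prop where
  | refl (s) : SCong env s s
  | symm {s t} : SCong env s t → SCong env t s
  | trans {s t u} : SCong env s t → SCong env t u → SCong env s u
  | comm (s t) : SCong env (.choice s t) (.choice t s)
  | assoc (s t u) : SCong env (.choice (.choice s t) u) (.choice s (.choice t u))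
  | unit (s) : SCong env (.choice s .nil) s
  | cong {s s' t t'} : SCong env s s' → SCong env t t' →
      SCong env (.choice s t) (.choice s' t')
  | mthen (s t) : SCong env (.mtch true s t) s
  | melse (s t) : SCong env (.mtch false s t) t
  | unfold (A vs) : SCong env (.call A vs) (env A vs)

/-- Structural congruence of system terms. -/
inductive PCong (env : Env) : Sys → Sys → Prop where
  | refl (M) : PCong env M M
  | symm {M N} : PCong env M N → PCong env N M
  | trans {M N L} : PCong env M N → PCong env N L → PCong env M L
  | comm (M N) : PCong env (.par M N) (.par N M)
  | assoc (M N L) : PCong env (.par (.par M N) L) (.par M (.par N L))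
  | unit (M) : PCong env (.par M .nil) M
  | cong {M M' N N'} : PCong env M M' → PCong env N N' →
      PCong env (.par M N) (.par M' N')
  | node (n) {s t} : SCong env s t → PCong env (.node n s) (.node n t)

/-- Structural congruence of networks: same connectivity graph, congruent system terms. -/
def NetCong (env : Env) (M N : Net) : Prop := M.g = N.g ∧ PCong env M.sys N.sys

/-! ### Intensional semantics of networks -/

inductive NAct : Type where
  | tau : Name → NAct
  | out : Name → Chan → Val → NAct
  | inp : Name → Chan → Val → NAct

/-- The intensional semantics of networks. -/
inductive IStep (env : Env) (Γ : Graph) : Sys → NAct → SDist Sys → Prop where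
  | broad {s n c v Δ} : SStep env s (.out c v) Δ →
      IStep env Γ (.node n s) (.out n c v) (push (Sys.node n) Δ)
  | recv {s n m c v Δ} : SStep env s (.inp c v) Δ → (m, n) ∈ Γ.E →
      IStep env Γ (.node n s) (.inp m c v) (push (Sys.node n) Δ)
  | deaf {s n m c v} : (∀ Δ, ¬ SStep env s (.inp c v) Δ) →
      IStep env Γ (.node n s) (.inp m c v) (dirac (.node n s))
  | disc {s n m c v} : (m, n) ∉ Γ.E →
      IStep env Γ (.node n s) (.inp m c v) (dirac (.node n s))
  | inil {m c v} : IStep env Γ .nil (.inp m c v) (dirac .nil)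
  | taun {s n Δ} : SStep env s .tau Δ →
      IStep env Γ (.node n s) (.tau n) (push (Sys.node n) Δ)
  | taupL {M N n Δ} : IStep env Γ M (.tau n) Δ →
      IStep env Γ (.par M N) (.tau n) (push2 Sys.par Δ (dirac N))
  | taupR {M N n Δ} : IStep env Γ N (.tau n) Δ →
      IStep env Γ (.par M N) (.tau n) (push2 Sys.par (dirac M) Δ)
  | prop {M N m c v Δ Θ} : IStep env Γ M (.inp m c v) Δ → IStep env Γ N (.inp m c v) Θ →
      IStep env Γ (.par M N) (.inp m c v) (push2 Sys.par Δ Θ)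
  | syncL {M N m c v Δ Θ} : IStep env Γ M (.out m c v) Δ → IStep env Γ N (.inp m c v) Θ →
      IStep env Γ (.par M N) (.out m c v) (push2 Sys.par Δ Θ)
  | syncR {M N m c v Δ Θ} : IStep env Γ M (.inp m c v) Δ → IStep env Γ N (.out m c v) Θ →
      IStep env Γ (.par M N) (.out m c v) (push2 Sys.par Δ Θ)

/-- A system term is ω-successful if it is congruent to `M' | n⟦ω + s⟧`. -/
def Successful (env : Env) (M : Sys) : Prop :=
  ∃ M' n s, PCong env M (.par M' (.node n (.choice .success s)))

/-- A network is ω-successful if its system term is. -/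
def NetSucc (env : Env) (N : Net) : Prop := Successful env N.sys

/-! ### Extensional semantics -/

inductive EAct : Type where
  | tau : EAct
  | inp : Name → Chan → Val → EAct
  | out : Chan → Val → Set Name → EAct

/-- Lifting a distribution of system terms to a distribution of networks with a
fixed connectivity graph. -/
noncomputable def netD (Γ : Graph) (Δ : SDist Sys) : SDist Net :=
  push (fun M => Net.mk Γ M) Δ

/-- The extensional semantics of networks. -/
inductive EStep (env : Env) : Net → EAct → SDist Net → Prop where
  | tauInt {Γ M m Δ} : ¬ Successful env M → IStep env Γ M (.tau m) Δ →
      EStep env (Net.mk Γ M) .tau (netD Γ Δ)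
  | tauOut {Γ M m c v Δ} : ¬ Successful env M → IStep env Γ M (.out m c v) Δ →
      (∀ n, (m, n) ∈ Γ.E → n ∈ M.nodes) →
      EStep env (Net.mk Γ M) .tau (netD Γ Δ)
  | inp {Γ M n c v Δ} : ¬ Successful env M → IStep env Γ M (.inp n c v) Δ →
      n ∈ Net.inp (Net.mk Γ M) →
      EStep env (Net.mk Γ M) (.inp n c v) (netD Γ Δ)
  | out {Γ M m c v Δ η} : ¬ Successful env M → IStep env Γ M (.out m c v) Δ →
      η = {n | n ∈ Net.out (Net.mk Γ M) ∧ (m, n) ∈ Γ.E} → η ≠ ∅ →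
      EStep env (Net.mk Γ M) (.out c v η) (netD Γ Δ)

/-! ### The testing structure on networks -/

/-- The reduction relation of the testing structure associated with networks. -/
def Red (env : Env) (N : Net) (Δ : SDist Net) : Prop :=
  ∃ Θ : SDist Sys, Δ = netD N.g Θ ∧
    ((∃ m, IStep env N.g N.sys (.tau m) Θ) ∨ ∃ m c v, IStep env N.g N.sys (.out m c v) Θ)

/-- The value of a sub-distribution of networks: its mass on successful networks. -/
noncomputable def Value (env : Env) (Δ : SDist Net) : ℝ≥0∞ :=
  ∑' N : Net, if NetSucc env N then Δ N else 0

/-- The set of possible results of a sub-distribution of networks. -/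
def Results (env : Env) (Δ : SDist Net) : Set ℝ≥0∞ :=
  {v | ∃ Δ', GExtreme (Red env) (NetSucc env) Δ Δ' ∧ v = Value env Δ'}

/-- The closure of a network: delete all interface vertices and edges incident to them. -/
noncomputable def Net.cl (N : Net) : Net :=
  ⟨⟨N.nodes, N.g.E.filter fun e => e.1 ∈ N.nodes ∧ e.2 ∈ N.nodes⟩, N.sys⟩

/-! ### Weak extensional actions -/

/-- Weak internal actions: hyper-derivations in the extensional pLTS. -/
def WTau (env : Env) : SDist Net → SDist Net → Prop :=
  GHyper (fun N Δ => EStep env N .tau Δ) (NetSucc env)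

/-- Strong extensional actions lifted to sub-distributions. -/
def LiftE (env : Env) (α : EAct) : SDist Net → SDist Net → Prop :=
  Lift fun N Δ => EStep env N α Δ

/-- Weak extensional input actions. -/
def WInp (env : Env) (n : Name) (c : Chan) (v : Val) (Δ Θ : SDist Net) : Prop :=
  ∃ Δ₁ Δ₂, WTau env Δ Δ₁ ∧ LiftE env (.inp n c v) Δ₁ Δ₂ ∧ WTau env Δ₂ Θ

/-- Weak extensional output actions: a broadcast may be simulated by a multicast
whose sets of target nodes partition the original one. -/
inductive WOut (env : Env) (c : Chan) (v : Val) : Set Name → SDist Net → SDist Net → Prop where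
  | single {η Δ Δ₁ Δ₂ Θ} : WTau env Δ Δ₁ → LiftE env (.out c v η) Δ₁ Δ₂ → WTau env Δ₂ Θ →
      WOut env c v η Δ Θ
  | comp {η₁ η₂ Δ Δ' Θ} : WOut env c v η₁ Δ Δ' → WOut env c v η₂ Δ' Θ → η₁ ∩ η₂ = ∅ →
      WOut env c v (η₁ ∪ η₂) Δ Θ

/-- Weak extensional actions. -/
def Weak (env : Env) : EAct → SDist Net → SDist Net → Prop
  | .tau => WTau env
  | .inp n c v => WInp env n c v
  | .out c v η => WOut env c v η

end PBC
namespace PBC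

/-! ### Simulations -/

/-- The defining closure property of simulations between well-formed networks. -/
def SimClosed (env : Env) (R : Net → Net → Prop) : Prop :=
  ∀ M N, R M N →
    M.wf ∧ N.wf ∧ M.inp = N.inp ∧ M.out = N.out ∧
    (Successful env M.sys →
      ∃ Θ, Weak env .tau (dirac N) Θ ∧ ∀ L, Θ L ≠ 0 → Successful env L.sys) ∧
    (¬ Successful env M.sys →
      ∀ α Δ, Weak env α (dirac M) Δ → ∃ Θ, Weak env α (dirac N) Θ ∧ LiftRel R Δ Θ)

/-- The simulation preorder: the largest relation satisfying `SimClosed`. -/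
def Sim (env : Env) (M N : Net) : Prop := ∃ R, SimClosed env R ∧ R M N

/-- The defining closure property of simple simulations: only strong actions of the
simulated network need be matched. -/
def SimSClosed (env : Env) (R : Net → Net → Prop) : Prop :=
  ∀ M N, R M N →
    M.wf ∧ N.wf ∧ M.inp = N.inp ∧ M.out = N.out ∧
    (Successful env M.sys →
      ∃ Θ, Weak env .tau (dirac N) Θ ∧ ∀ L, Θ L ≠ 0 → Successful env L.sys) ∧
    (¬ Successful env M.sys →
      ∀ α Δ, EStep env M α Δ → ∃ Θ, Weak env α (dirac N) Θ ∧ LiftRel R Δ Θ)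

/-- The simple simulation preorder. -/
def SimS (env : Env) (M N : Net) : Prop := ∃ R, SimSClosed env R ∧ R M N

/-! ### Finitary networks -/

/-- One network follows another in the extensional pLTS. -/
def ENext (env : Env) (M N : Net) : Prop := ∃ α Δ, EStep env M α Δ ∧ Δ N ≠ 0

/-- The part of the extensional pLTS generated by (reachable from) a network. -/
def Reach (env : Env) (M : Net) : Set Net := {N | Relation.ReflTransGen (ENext env) M N}

/-- A network is finitary if the extensional pLTS it generates is finite-state and
finite-branching. -/
def Finitary (env : Env) (M : Net) : Prop :=
  (Reach env M).Finite ∧ ∀ N ∈ Reach env M, {Δ | ∃ α, EStep env N α Δ}.Finite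

/-! ### Deadlock and deadlock simulations -/

/-- A network is deadlocked: not successful, and without extensional `τ`- or
output actions. -/
def Deadlocked (env : Env) (M : Net) : Prop :=
  ¬ Successful env M.sys ∧ (∀ Δ, ¬ EStep env M .tau Δ) ∧
    ∀ c v η Δ, ¬ EStep env M (.out c v η) Δ

/-- The defining closure property of deadlock simulations, relating networks to
sub-distributions of networks. -/
def DSimClosed (env : Env) (R : Net → SDist Net → Prop) : Prop :=
  ∀ M Θ, R M Θ →
    (Deadlocked env M → ∃ Θ', WTau env Θ Θ' ∧ ∀ N, Θ' N ≠ 0 → Deadlocked env N) ∧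
    (∀ α Δ, Weak env α (dirac M) Δ → ∃ Θ', Weak env α Θ Θ' ∧ Lift R Δ Θ')

/-- The deadlock simulation preorder `M ⊴_d Θ`. -/
def DSim (env : Env) (M : Net) (Θ : SDist Net) : Prop := ∃ R, DSimClosed env R ∧ R M Θ

/-- The defining closure property of divergence-free deadlock simulations, relating
networks to networks. -/
def DFSimClosed (env : Env) (R : Net → Net → Prop) : Prop :=
  ∀ M N, R M N →
    (Deadlocked env M → ∃ Θ, WTau env (dirac N) Θ ∧ ∀ L, Θ L ≠ 0 → Deadlocked env L) ∧
    (∀ α Δ, Weak env α (dirac M) Δ → ∃ Θ, Weak env α (dirac N) Θ ∧ LiftRel R Δ Θ)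

/-- The divergence-free deadlock simulation preorder `M ⊴_df N`. -/
def DFSim (env : Env) (M N : Net) : Prop := ∃ R, DFSimClosed env R ∧ R M N

/-- A network is convergent if no state of its generated extensional pLTS has a
hyper-derivation to the empty sub-distribution. -/
def NetConvergent (env : Env) (M : Net) : Prop :=
  ∀ N ∈ Reach env M, ¬ WTau env (dirac N) (fun _ => 0)

/-! ### Testing preorders -/

/-- Hoare preorder on sets of outcomes. -/
def HoareLe (O₁ O₂ : Set ℝ≥0∞) : Prop := ∀ p₁ ∈ O₁, ∃ p₂ ∈ O₂, p₁ ≤ p₂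

/-- Smyth preorder on sets of outcomes. -/
def SmythLe (O₁ O₂ : Set ℝ≥0∞) : Prop := ∀ p₂ ∈ O₂, ∃ p₁ ∈ O₁, p₁ ≤ p₂

/-- The may-testing preorder between well-formed networks with the same input and
output nodes. -/
def MayLe (env : Env) (M₁ M₂ : Net) : Prop :=
  M₁.wf ∧ M₂.wf ∧ M₁.inp = M₂.inp ∧ M₁.out = M₂.out ∧
    ∀ T, T.wf → M₁.Defined T → M₂.Defined T →
      HoareLe (Results env (dirac (M₁.comp T))) (Results env (dirac (M₂.comp T)))

/-- The must-testing preorder between well-formed networks with the same input and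
output nodes. -/
def MustLe (env : Env) (M₁ M₂ : Net) : Prop :=
  M₁.wf ∧ M₂.wf ∧ M₁.inp = M₂.inp ∧ M₁.out = M₂.out ∧
    ∀ T, T.wf → M₁.Defined T → M₂.Defined T →
      SmythLe (Results env (dirac (M₁.comp T))) (Results env (dirac (M₂.comp T)))

/-! ### Renaming, node-stability and properness -/

/-- Renaming node names in a system term. -/
def Sys.rename (σ : Name → Name) : Sys → Sys
  | .nil => .nil
  | .node n s => .node (σ n) s
  | .par M N => .par (Sys.rename σ M) (Sys.rename σ N)

/-- Renaming node names in a connectivity graph along a permutation. -/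
def Graph.rename (σ : Equiv.Perm Name) (Γ : Graph) : Graph :=
  ⟨Γ.V.image σ, Γ.E.image fun e => (σ e.1, σ e.2)⟩

/-- Renaming node names in a network along a permutation. -/
def Net.rename (σ : Equiv.Perm Name) (N : Net) : Net :=
  ⟨N.g.rename σ, N.sys.rename σ⟩

/-- A sub-distribution of networks is node-stable if all networks in its support share
the same connectivity graph and the same node set. -/
def NodeStable (Θ : SDist Net) : Prop :=
  ∀ L L', Θ L ≠ 0 → Θ L' ≠ 0 → L.g = L'.g ∧ L.nodes = L'.nodes

mutual
  /-- A state contains an occurrence of the success clause `ω`. -/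
  inductive PState.hasOmega : PState → Prop where
    | success : PState.hasOmega .success
    | bcast {c v p} : Proc.hasOmega p → PState.hasOmega (.bcast c v p)
    | recv {c f} (v : Val) : Proc.hasOmega (f v) → PState.hasOmega (.recv c f)
    | choiceL {s t} : PState.hasOmega s → PState.hasOmega (.choice s t)
    | choiceR {s t} : PState.hasOmega t → PState.hasOmega (.choice s t)
    | mtchL {b s t} : PState.hasOmega s → PState.hasOmega (.mtch b s t)
    | mtchR {b s t} : PState.hasOmega t → PState.hasOmega (.mtch b s t)
    | pre {p} : Proc.hasOmega p → PState.hasOmega (.pre p)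
  /-- A process contains an occurrence of the success clause `ω`. -/
  inductive Proc.hasOmega : Proc → Prop where
    | st {s} : PState.hasOmega s → Proc.hasOmega (.st s)
    | pchoiceL {p q r} : Proc.hasOmega p → Proc.hasOmega (.pchoice p q r)
    | pchoiceR {p q r} : Proc.hasOmega r → Proc.hasOmega (.pchoice p q r)
end

/-- A system term contains an occurrence of the success clause `ω`. -/
inductive Sys.hasOmega : Sys → Prop where
  | node {n s} : PState.hasOmega s → Sys.hasOmega (.node n s)
  | parL {M N} : Sys.hasOmega M → Sys.hasOmega (.par M N)
  | parR {M N} : Sys.hasOmega N → Sys.hasOmega (.par M N)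

/-- A network is proper if its system term contains no occurrence of `ω`. -/
def Net.proper (N : Net) : Prop := ¬ N.sys.hasOmega

end PBC
namespace PBC

/-- For well-formed networks `M, N, L`, the composition `(M ⊛ N) ⊛ L`
is defined if and only if `M ⊛ (N ⊛ L)` is defined, and whenever both are defined they
are equal (networks being identified up to structural congruence of system terms). -/
theorem comp_assoc (env : Env) (M N L : Net) (hM : M.wf) (hN : N.wf) (hL : L.wf) :
    ((M.Defined N ∧ (M.comp N).Defined L) ↔ (N.Defined L ∧ M.Defined (N.comp L))) ∧
    ((M.Defined N ∧ (M.comp N).Defined L) →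
      NetCong env ((M.comp N).comp L) (M.comp (N.comp L))) := by
  have hmem : ∀ (A B : Net) (n : Name),
      n ∈ (A.comp B).nodes ↔ n ∈ A.nodes ∨ n ∈ B.nodes := by
    intro A B n
    simp [Net.comp, Net.nodes, Sys.nodes, Sys.nodesM]
  have hV : ∀ (A B : Net), (A.comp B).g.V = A.g.V ∪ B.g.V := fun A B => rfl
  constructor
  · constructor
    · rintro ⟨h1, h2⟩
      refine ⟨fun n hn => h2 n ((hmem M N n).2 (Or.inr hn)), fun n hn => ?_⟩
      rw [hV]
      simp only [Finset.mem_union, not_or]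
      exact ⟨h1 n hn, h2 n ((hmem M N n).2 (Or.inl hn))⟩
    · rintro ⟨h1, h2⟩
      have h2' : ∀ n ∈ M.nodes, n ∉ N.g.V ∧ n ∉ L.g.V := by
        intro n hn
        have := h2 n hn
        rw [hV] at this
        simpa [not_or] using this
      refine ⟨fun n hn => (h2' n hn).1, fun n hn => ?_⟩
      rcases (hmem M N n).1 hn with h | h
      · exact (h2' n h).2
      · exact h1 n h
  · intro _
    refine ⟨?_, PCong.assoc _ _ _⟩
    show (M.g.union N.g).union L.g = M.g.union (N.g.union L.g)
    simp [Graph.union, Finset.union_assoc]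

end PBC
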